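/- arXiv:2204.13518 — 6 statements merged into one kernel-verified Lean document; each statement's English description precedes it below -/
import Mathlib

section
/- Let (g, ·, T) be a Rota-Baxter pre-Lie algebra of weight λ. Then the new operation a ⋆ b := a·T(b) + T(a)·b + λ a·b makes (g, ⋆) into a pre-Lie algebra. -/
/-- The derived product of a Rota-Baxter pre-Lie algebra of weight λ. -/
def rbStar {k : Type*} [Field k] [CharZero k]
    {A : Type*} [AddCommGroup A] [Module k A]
    (lam : k) (mul : A →ₗ[k] A →ₗ[k] A) (T : A →ₗ[k] A) (a b : A) : A :=
  mul a (T b) + mul (T a) b + lam • mul a b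

/-- If `(g,·,T)` is a Rota-Baxter pre-Lie algebra of weight λ, then
`a ⋆ b := a·T(b) + T(a)·b + λ a·b` makes `(g,⋆)` a pre-Lie algebra. -/
theorem stmt2 {k : Type*} [Field k] [CharZero k]
    {A : Type*} [AddCommGroup A] [Module k A]
    (lam : k) (mul : A →ₗ[k] A →ₗ[k] A) (T : A →ₗ[k] A)
    (hpl : ∀ x y z : A, mul (mul x y) z - mul x (mul y z)
      = mul (mul y x) z - mul y (mul x z))
    (hRB : ∀ a b : A, mul (T a) (T b)
      = T (mul a (T b) + mul (T a) b + lam • mul a b)) :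
    ∀ x y z : A,
      rbStar lam mul T (rbStar lam mul T x y) z - rbStar lam mul T x (rbStar lam mul T y z)
      = rbStar lam mul T (rbStar lam mul T y x) z - rbStar lam mul T y (rbStar lam mul T x z) := by
  intro x y z
  simp only [rbStar, ← hRB, map_add, map_smul, LinearMap.add_apply, LinearMap.smul_apply,
    smul_add, smul_smul]
  linear_combination (norm := module) hpl x (T y) (T z) + hpl (T x) y (T z) +
    hpl (T x) (T y) z + lam • hpl x y (T z) + lam • hpl x (T y) z + lam • hpl (T x) y z +
    (lam * lam) • hpl x y z
end

section
/- Let (g, ·, T) be a Rota-Baxter pre-Lie algebra of weight λ and let a ⋆ b := a·T(b) + T(a)·b + λ a·b. Then [x,y]_⋆ = x ⋆ y - y ⋆ x defines a Lie algebra structure on g. -/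
/-- `[x,y]_⋆ = x ⋆ y - y ⋆ x` defines a Lie algebra structure on `g`. -/
theorem stmt5 {k : Type*} [Field k] [CharZero k]
    {A : Type*} [AddCommGroup A] [Module k A]
    (lam : k) (mul : A →ₗ[k] A →ₗ[k] A) (T : A →ₗ[k] A)
    (hpl : ∀ x y z : A, mul (mul x y) z - mul x (mul y z)
      = mul (mul y x) z - mul y (mul x z))
    (hRB : ∀ a b : A, mul (T a) (T b)
      = T (mul a (T b) + mul (T a) b + lam • mul a b)) :
    (∀ x y : A, rbStar lam mul T x y - rbStar lam mul T y x
      = -(rbStar lam mul T y x - rbStar lam mul T x y)) ∧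
    (∀ x y z : A,
      (rbStar lam mul T (rbStar lam mul T x y - rbStar lam mul T y x) z
        - rbStar lam mul T z (rbStar lam mul T x y - rbStar lam mul T y x)) +
      (rbStar lam mul T (rbStar lam mul T y z - rbStar lam mul T z y) x
        - rbStar lam mul T x (rbStar lam mul T y z - rbStar lam mul T z y)) +
      (rbStar lam mul T (rbStar lam mul T z x - rbStar lam mul T x z) y
        - rbStar lam mul T y (rbStar lam mul T z x - rbStar lam mul T x z)) = 0) := by
  set s := rbStar lam mul T with hs
  -- the derived product is again pre-Lie
  have key : ∀ x y z : A, s (s x y) z - s x (s y z) = s (s y x) z - s y (s x z) := by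
    intro x y z
    simp only [hs, rbStar]
    simp only [← hRB, map_add, map_smul, LinearMap.add_apply, LinearMap.smul_apply]
    linear_combination (norm := module) hpl x (T y) (T z) + hpl (T x) y (T z)
      + lam • hpl x y (T z) + hpl (T x) (T y) z + lam • hpl x (T y) z
      + lam • hpl (T x) y z + (lam * lam) • hpl x y z
  have hadd : ∀ a b c : A, s (a - b) c = s a c - s b c := by
    intro a b c; simp [hs, rbStar, map_sub, smul_sub]; abel
  have hadd' : ∀ a b c : A, s a (b - c) = s a b - s a c := by
    intro a b c; simp [hs, rbStar, map_sub, smul_sub]; abel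
  refine ⟨fun x y => (neg_sub _ _).symm, fun x y z => ?_⟩
  simp only [hadd, hadd']
  have h1 := key x y z
  have h2 := key y z x
  have h3 := key z x y
  have h4 := key y x z
  have h5 := key z y x
  have h6 := key x z y
  linear_combination (norm := abel) h1 + h2 + h3
end

section
/- Let (g, ·, T) be a Rota-Baxter pre-Lie algebra of weight λ and (M, S, P, T_M) a Rota-Baxter bimodule over it. Define a ▷ m := T(a)·m - T_M(a·m) and m ◁ a := m·T(a) - T_M(m·a). Then for all a,b ∈ g and m ∈ M: a ▷ (b ▷ m) - (a ⋆ b) ▷ m = b ▷ (a ▷ m) - (b ⋆ a) ▷ m, where a ⋆ b = a·T(b) + T(a)·b + λ a·b. -/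
/-- The new left action `a ▷ m := T(a)·m - T_M(a·m)`. -/
def rbRhd {k : Type*} [Field k] [CharZero k]
    {A M : Type*} [AddCommGroup A] [Module k A] [AddCommGroup M] [Module k M]
    (T : A →ₗ[k] A) (TM : M →ₗ[k] M)
    (S : A →ₗ[k] M →ₗ[k] M) (a : A) (m : M) : M :=
  S (T a) m - TM (S a m)

/-- The new right action `m ◁ a := m·T(a) - T_M(m·a)`. -/
def rbLhd {k : Type*} [Field k] [CharZero k]
    {A M : Type*} [AddCommGroup A] [Module k A] [AddCommGroup M] [Module k M]
    (T : A →ₗ[k] A) (TM : M →ₗ[k] M)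
    (P : M →ₗ[k] A →ₗ[k] M) (m : M) (a : A) : M :=
  P m (T a) - TM (P m a)

/-- Left pre-Lie bimodule axiom for the new actions over `(g,⋆)`. -/
theorem stmt6 {k : Type*} [Field k] [CharZero k]
    {A M : Type*} [AddCommGroup A] [Module k A] [AddCommGroup M] [Module k M]
    (lam : k) (mul : A →ₗ[k] A →ₗ[k] A) (T : A →ₗ[k] A)
    (S : A →ₗ[k] M →ₗ[k] M) (P : M →ₗ[k] A →ₗ[k] M) (TM : M →ₗ[k] M)
    (hpl : ∀ x y z : A, mul (mul x y) z - mul x (mul y z)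
      = mul (mul y x) z - mul y (mul x z))
    (hRB : ∀ a b : A, mul (T a) (T b)
      = T (mul a (T b) + mul (T a) b + lam • mul a b))
    (hb1 : ∀ (a b : A) (m : M), S a (S b m) - S (mul a b) m
      = S b (S a m) - S (mul b a) m)
    (hb2 : ∀ (a b : A) (m : M), S a (P m b) - P (S a m) b
      = P m (mul a b) - P (P m a) b)
    (hTM1 : ∀ (a : A) (m : M), S (T a) (TM m)
      = TM (S a (TM m) + S (T a) m + lam • S a m))
    (hTM2 : ∀ (a : A) (m : M), P (TM m) (T a)
      = TM (P m (T a) + P (TM m) a + lam • P m a)) :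
    ∀ (a b : A) (m : M),
      rbRhd T TM S a (rbRhd T TM S b m) - rbRhd T TM S (rbStar lam mul T a b) m
      = rbRhd T TM S b (rbRhd T TM S a m) - rbRhd T TM S (rbStar lam mul T b a) m := by
  intro a b m
  simp only [rbRhd, rbStar, map_add, map_smul, map_sub, LinearMap.add_apply,
    LinearMap.smul_apply, LinearMap.sub_apply]
  rw [hTM1 a (S b m), hTM1 b (S a m)]
  have h1 := hb1 (T a) (T b) m
  have h2 := congrArg TM (hb1 a (T b) m)
  have h3 := congrArg TM (hb1 a b m)
  have h4 := congrArg TM (hb1 (T a) b m)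
  have e1 := congrArg (fun x => S x m) (hRB a b)
  have e2 := congrArg (fun x => S x m) (hRB b a)
  simp only [map_sub] at h2 h3 h4
  simp only [map_add, map_smul, LinearMap.add_apply, LinearMap.smul_apply] at e1 e2
  simp only [map_add, map_smul]
  linear_combination (norm := module) h1 - h2 - h4 - lam • h3 + e1 - e2
end

section
/- Let (g, ·, T) be a Rota-Baxter pre-Lie algebra of weight λ and (M, S, P, T_M) a Rota-Baxter bimodule over it. Define a ▷ m := T(a)·m - T_M(a·m) and m ◁ a := m·T(a) - T_M(m·a). Then for all a,b ∈ g and m ∈ M: a ▷ (m ◁ b) - (a ▷ m) ◁ b = m ◁ (a ⋆ b) - (m ◁ a) ◁ b, where a ⋆ b = a·T(b) + T(a)·b + λ a·b. -/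
/-- Mixed pre-Lie bimodule axiom for the new actions over `(g,⋆)`. -/
theorem stmt7 {k : Type*} [Field k] [CharZero k]
    {A M : Type*} [AddCommGroup A] [Module k A] [AddCommGroup M] [Module k M]
    (lam : k) (mul : A →ₗ[k] A →ₗ[k] A) (T : A →ₗ[k] A)
    (S : A →ₗ[k] M →ₗ[k] M) (P : M →ₗ[k] A →ₗ[k] M) (TM : M →ₗ[k] M)
    (hpl : ∀ x y z : A, mul (mul x y) z - mul x (mul y z)
      = mul (mul y x) z - mul y (mul x z))
    (hRB : ∀ a b : A, mul (T a) (T b)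
      = T (mul a (T b) + mul (T a) b + lam • mul a b))
    (hb1 : ∀ (a b : A) (m : M), S a (S b m) - S (mul a b) m
      = S b (S a m) - S (mul b a) m)
    (hb2 : ∀ (a b : A) (m : M), S a (P m b) - P (S a m) b
      = P m (mul a b) - P (P m a) b)
    (hTM1 : ∀ (a : A) (m : M), S (T a) (TM m)
      = TM (S a (TM m) + S (T a) m + lam • S a m))
    (hTM2 : ∀ (a : A) (m : M), P (TM m) (T a)
      = TM (P m (T a) + P (TM m) a + lam • P m a)) :
    ∀ (a b : A) (m : M),
      rbRhd T TM S a (rbLhd T TM P m b) - rbLhd T TM P (rbRhd T TM S a m) b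
      = rbLhd T TM P m (rbStar lam mul T a b) - rbLhd T TM P (rbLhd T TM P m a) b := by
  intro a b m
  have h1 := hb2 (T a) (T b) m
  have h2 := hTM1 a (P m b)
  have h3 := hTM2 b (S a m)
  have h4 := hTM2 b (P m a)
  have h5 := congrArg TM (hb2 a (T b) m)
  have h6 := congrArg TM (hb2 (T a) b m)
  have h7 := congrArg (fun x => TM (lam • x)) (hb2 a b m)
  simp only [rbRhd, rbLhd, rbStar]
  rw [← hRB a b]
  simp only [map_add, map_sub, map_smul, LinearMap.sub_apply, LinearMap.add_apply, LinearMap.smul_apply] at *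
  linear_combination (norm := module) h1 - h2 + h3 - h4 - h5 - h6 - h7
end

section
/- Let (g, ·, T) be a Rota-Baxter pre-Lie algebra of weight λ and (M, ·, T_M) a Rota-Baxter bimodule over it. With a ▷ m := T(a)·m - T_M(a·m) and m ◁ a := m·T(a) - T_M(m·a), the triple (M, ▷, ◁, T_M) is a Rota-Baxter bimodule over the Rota-Baxter pre-Lie algebra (g, ⋆, T), where a ⋆ b = a·T(b) + T(a)·b + λ a·b; in particular T(a) ▷ T_M(m) = T_M(a ▷ T_M(m) + T(a) ▷ m + λ a ▷ m) for all a ∈ g, m ∈ M. -/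
/-- `(M, ▷, ◁, T_M)` is a Rota-Baxter bimodule over `(g, ⋆, T)`. -/
theorem stmt8 {k : Type*} [Field k] [CharZero k]
    {A M : Type*} [AddCommGroup A] [Module k A] [AddCommGroup M] [Module k M]
    (lam : k) (mul : A →ₗ[k] A →ₗ[k] A) (T : A →ₗ[k] A)
    (S : A →ₗ[k] M →ₗ[k] M) (P : M →ₗ[k] A →ₗ[k] M) (TM : M →ₗ[k] M)
    (hpl : ∀ x y z : A, mul (mul x y) z - mul x (mul y z)
      = mul (mul y x) z - mul y (mul x z))
    (hRB : ∀ a b : A, mul (T a) (T b)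
      = T (mul a (T b) + mul (T a) b + lam • mul a b))
    (hb1 : ∀ (a b : A) (m : M), S a (S b m) - S (mul a b) m
      = S b (S a m) - S (mul b a) m)
    (hb2 : ∀ (a b : A) (m : M), S a (P m b) - P (S a m) b
      = P m (mul a b) - P (P m a) b)
    (hTM1 : ∀ (a : A) (m : M), S (T a) (TM m)
      = TM (S a (TM m) + S (T a) m + lam • S a m))
    (hTM2 : ∀ (a : A) (m : M), P (TM m) (T a)
      = TM (P m (T a) + P (TM m) a + lam • P m a)) :
    (∀ (a b : A) (m : M),
      rbRhd T TM S a (rbRhd T TM S b m) - rbRhd T TM S (rbStar lam mul T a b) m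
      = rbRhd T TM S b (rbRhd T TM S a m) - rbRhd T TM S (rbStar lam mul T b a) m) ∧
    (∀ (a b : A) (m : M),
      rbRhd T TM S a (rbLhd T TM P m b) - rbLhd T TM P (rbRhd T TM S a m) b
      = rbLhd T TM P m (rbStar lam mul T a b) - rbLhd T TM P (rbLhd T TM P m a) b) ∧
    (∀ (a : A) (m : M),
      rbRhd T TM S (T a) (TM m)
      = TM (rbRhd T TM S a (TM m) + rbRhd T TM S (T a) m + lam • rbRhd T TM S a m)) ∧
    (∀ (a : A) (m : M),
      rbLhd T TM P (TM m) (T a)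
      = TM (rbLhd T TM P m (T a) + rbLhd T TM P (TM m) a + lam • rbLhd T TM P m a)) := by
  refine ⟨?_, ?_, ?_, ?_⟩
  · intro a b m
    simp only [rbRhd, rbStar]
    rw [← hRB a b, ← hRB b a]
    simp only [hTM1, map_add, map_sub, map_smul, LinearMap.add_apply, LinearMap.smul_apply]
    have H1 := hb1 (T a) (T b) m
    have H3 := congrArg TM (hb1 (T a) b m)
    have H4 := congrArg TM (hb1 a (T b) m)
    have H5 := congrArg TM (hb1 a b m)
    simp only [map_sub] at H3 H4 H5
    linear_combination (norm := module) H1 - H3 - H4 - lam • H5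
  · intro a b m
    simp only [rbRhd, rbLhd, rbStar]
    rw [← hRB a b]
    simp only [hTM1, hTM2, map_add, map_sub, map_smul, LinearMap.add_apply,
      LinearMap.smul_apply, LinearMap.sub_apply]
    have K1 := hb2 (T a) (T b) m
    have K3 := congrArg TM (hb2 (T a) b m)
    have K4 := congrArg TM (hb2 a (T b) m)
    have K5 := congrArg TM (hb2 a b m)
    simp only [map_sub] at K3 K4 K5
    linear_combination (norm := module) K1 - K3 - K4 - lam • K5
  · intro a m
    simp only [rbRhd, hTM1, map_add, map_sub, map_smul]
    module
  · intro a m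
    simp only [rbLhd, hTM2, map_add, map_sub, map_smul]
    module
end

section
/- Let 0 → M → ĝ →p g → 0 be an abelian extension of Rota-Baxter pre-Lie algebras of weight λ (M has trivial multiplication) and s: g → ĝ a section of p. Define a·m := s(a)·m and m·a := m·s(a) for a ∈ g, m ∈ M. Then (M, ·, T_M) is a Rota-Baxter bimodule over (g, ·, T). -/
/-- Given an abelian extension of Rota-Baxter pre-Lie algebras (of weight λ) and a
section `s` of `p`, the actions `a·m := s(a)·m`, `m·a := m·s(a)` make
`(M, ·, T_M)` (with `T_M` the restriction of `T̂` to `M`) a Rota-Baxter bimodule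
over `(g, ·, T)`. -/
theorem stmt11 {k : Type*} [Field k] [CharZero k]
    {G H : Type*} [AddCommGroup G] [Module k G] [AddCommGroup H] [Module k H]
    (lam : k)
    (mulG : G →ₗ[k] G →ₗ[k] G) (T : G →ₗ[k] G)
    (mulH : H →ₗ[k] H →ₗ[k] H) (Th : H →ₗ[k] H)
    (M : Submodule k H) (p : H →ₗ[k] G)
    (hpsurj : Function.Surjective p)
    (hker : LinearMap.ker p = M)
    (hpreG : ∀ x y z : G, mulG (mulG x y) z - mulG x (mulG y z)
      = mulG (mulG y x) z - mulG y (mulG x z))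
    (hpreH : ∀ x y z : H, mulH (mulH x y) z - mulH x (mulH y z)
      = mulH (mulH y x) z - mulH y (mulH x z))
    (hRBG : ∀ a b : G, mulG (T a) (T b)
      = T (mulG a (T b) + mulG (T a) b + lam • mulG a b))
    (hRBH : ∀ a b : H, mulH (Th a) (Th b)
      = Th (mulH a (Th b) + mulH (Th a) b + lam • mulH a b))
    (hpmul : ∀ x y : H, p (mulH x y) = mulG (p x) (p y))
    (hpT : ∀ x : H, p (Th x) = T (p x))
    (hMtriv : ∀ u ∈ M, ∀ v ∈ M, mulH u v = 0)
    (hThM : ∀ m ∈ M, Th m ∈ M)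
    (s : G →ₗ[k] H) (hs : ∀ a : G, p (s a) = a) :
    (∀ (a : G), ∀ m ∈ M, mulH (s a) m ∈ M) ∧
    (∀ (a : G), ∀ m ∈ M, mulH m (s a) ∈ M) ∧
    (∀ (a b : G), ∀ m ∈ M,
      mulH (s a) (mulH (s b) m) - mulH (s (mulG a b)) m
      = mulH (s b) (mulH (s a) m) - mulH (s (mulG b a)) m) ∧
    (∀ (a b : G), ∀ m ∈ M,
      mulH (s a) (mulH m (s b)) - mulH (mulH (s a) m) (s b)
      = mulH m (s (mulG a b)) - mulH (mulH m (s a)) (s b)) ∧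
    (∀ (a : G), ∀ m ∈ M,
      mulH (s (T a)) (Th m)
      = Th (mulH (s a) (Th m) + mulH (s (T a)) m + lam • mulH (s a) m)) ∧
    (∀ (a : G), ∀ m ∈ M,
      mulH (Th m) (s (T a))
      = Th (mulH m (s (T a)) + mulH (Th m) (s a) + lam • mulH m (s a))) := by
  have hmem : ∀ x : H, x ∈ M ↔ p x = 0 := by
    intro x; rw [← hker]; exact Iff.rfl
  have hleft : ∀ (a : G), ∀ m ∈ M, mulH (s a) m ∈ M := by
    intro a m hm
    rw [hmem] at hm ⊢
    rw [hpmul, hm]; simp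
  have hright : ∀ (a : G), ∀ m ∈ M, mulH m (s a) ∈ M := by
    intro a m hm
    rw [hmem] at hm ⊢
    rw [hpmul, hm]; simp
  have hu : ∀ c d : G, s (mulG c d) - mulH (s c) (s d) ∈ M := by
    intro c d; rw [hmem]; simp [hpmul, hs]
  have hsub1 : ∀ (x y m : H), mulH (x - y) m = mulH x m - mulH y m := by
    intro x y m; rw [map_sub]; rfl
  have hsub2 : ∀ (m x y : H), mulH m (x - y) = mulH m x - mulH m y := by
    intro m x y; exact map_sub (mulH m) x y
  have e1 : ∀ (c d : G), ∀ m ∈ M, mulH (s (mulG c d)) m = mulH (mulH (s c) (s d)) m := by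
    intro c d m hm
    have h0 := hMtriv _ (hu c d) _ hm
    rw [hsub1] at h0
    exact sub_eq_zero.mp h0
  have e2 : ∀ (c d : G), ∀ m ∈ M, mulH m (s (mulG c d)) = mulH m (mulH (s c) (s d)) := by
    intro c d m hm
    have h0 := hMtriv _ hm _ (hu c d)
    rw [hsub2] at h0
    exact sub_eq_zero.mp h0
  have hTu : ∀ a : G, s (T a) - Th (s a) ∈ M := by
    intro a; rw [hmem]; simp [hpT, hs]
  refine ⟨hleft, hright, ?_, ?_, ?_, ?_⟩
  · intro a b m hm
    have h := hpreH (s a) (s b) m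
    rw [e1 a b m hm, e1 b a m hm]
    simpa [neg_sub] using congrArg Neg.neg h
  · intro a b m hm
    have h := hpreH (s a) m (s b)
    rw [e2 a b m hm]
    simpa [neg_sub] using congrArg Neg.neg h
  · intro a m hm
    have hTm := hThM m hm
    have k1 : mulH (s (T a)) (Th m) = mulH (Th (s a)) (Th m) := by
      have h0 := hMtriv _ (hTu a) _ hTm
      rw [hsub1] at h0
      exact sub_eq_zero.mp h0
    have k2 : mulH (s (T a)) m = mulH (Th (s a)) m := by
      have h0 := hMtriv _ (hTu a) _ hm
      rw [hsub1] at h0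
      exact sub_eq_zero.mp h0
    rw [k1, k2, hRBH]
  · intro a m hm
    have hTm := hThM m hm
    have k1 : mulH (Th m) (s (T a)) = mulH (Th m) (Th (s a)) := by
      have h0 := hMtriv _ hTm _ (hTu a)
      rw [hsub2] at h0
      exact sub_eq_zero.mp h0
    have k2 : mulH m (s (T a)) = mulH m (Th (s a)) := by
      have h0 := hMtriv _ hm _ (hTu a)
      rw [hsub2] at h0
      exact sub_eq_zero.mp h0
    rw [k1, k2, hRBH]
end
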